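/- Let N ≥ 1 and a ≥ 0. The weight w_a(x) = ‖x‖^a on ℝ^N is doubling with doubling constant 2^{N+a}: for every x0 ∈ ℝ^N and every R > 0, ∫_{B_{2R}(x0)} ‖x‖^a dx ≤ 2^{N+a} ∫_{B_R(x0)} ‖x‖^a dx. -/

import Mathlib

/-!
Rescaling by `2` gives `∫_{B_{2R}(x₀)} ‖x‖^a = 2^{N+a} ∫_{B_R(x₀/2)} ‖x‖^a`, so it suffices that a
radially nondecreasing weight has no more mass on `B_R(p)` than on `B_R(q)` when `‖p‖ ≤ ‖q‖`.
The reflection across the perpendicular bisector of `p` and `q` is a measure-preserving isometry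
exchanging `B_R(p) \ B_R(q)` and `B_R(q) \ B_R(p)`, and, since the origin lies on the side of `p`,
it does not decrease the norm of any point closer to `p` than to `q`.
-/

open MeasureTheory Metric Set Submodule
open scoped ENNReal RealInnerProductSpace

section

variable {E : Type*} [NormedAddCommGroup E] [InnerProductSpace ℝ E]

noncomputable def perpBisectorReflection (p q : E) : E ≃ᵢ E :=
  ((IsometryEquiv.subRight (midpoint ℝ p q)).trans
    (reflection (ℝ ∙ (p - q))ᗮ).toIsometryEquiv).trans (IsometryEquiv.addRight (midpoint ℝ p q))

variable {p q : E}

theorem perpBisectorReflection_apply (x : E) :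
    perpBisectorReflection p q x =
      x - (2 * (⟪p - q, x - midpoint ℝ p q⟫ / ‖p - q‖ ^ 2)) • (p - q) := by
  simp only [perpBisectorReflection, IsometryEquiv.trans_apply, IsometryEquiv.subRight_apply,
    LinearIsometryEquiv.coe_toIsometryEquiv, IsometryEquiv.addRight_apply,
    reflection_orthogonal_apply, reflection_singleton_apply]
  module

theorem perpBisectorReflection_involutive :
    Function.Involutive (perpBisectorReflection p q) := by
  intro x
  simp [perpBisectorReflection]

theorem perpBisectorReflection_left : perpBisectorReflection p q p = q := by
  have hm : midpoint ℝ p q = (2⁻¹ : ℝ) • (p + q) := by rw [midpoint_eq_smul_add, invOf_eq_inv]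
  have hp : p - midpoint ℝ p q = (2⁻¹ : ℝ) • (p - q) := by rw [hm]; module
  simp only [perpBisectorReflection, IsometryEquiv.trans_apply, IsometryEquiv.subRight_apply,
    LinearIsometryEquiv.coe_toIsometryEquiv, IsometryEquiv.addRight_apply]
  rw [hp, map_smul, reflection_orthogonalComplement_singleton_eq_neg, hm]
  module

theorem perpBisectorReflection_right : perpBisectorReflection p q q = p := by
  calc perpBisectorReflection p q q
      = perpBisectorReflection p q (perpBisectorReflection p q p) := by
        rw [perpBisectorReflection_left]
    _ = p := perpBisectorReflection_involutive p

theorem perpBisectorReflection_preimage_ball_right (R : ℝ) :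
    perpBisectorReflection p q ⁻¹' ball q R = ball p R := by
  rw [IsometryEquiv.preimage_ball,
    (IsometryEquiv.symm_apply_eq _).2 perpBisectorReflection_left.symm]

theorem perpBisectorReflection_preimage_ball_left (R : ℝ) :
    perpBisectorReflection p q ⁻¹' ball p R = ball q R := by
  rw [IsometryEquiv.preimage_ball,
    (IsometryEquiv.symm_apply_eq _).2 perpBisectorReflection_right.symm]

theorem norm_le_norm_perpBisectorReflection (hpq : ‖p‖ ≤ ‖q‖) {x : E}
    (hx : dist x p ≤ dist x q) : ‖x‖ ≤ ‖perpBisectorReflection p q x‖ := by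
  have h_apply := perpBisectorReflection_apply (p := p) (q := q) x
  have hm : midpoint ℝ p q = (2⁻¹ : ℝ) • (p + q) := by rw [midpoint_eq_smul_add, invOf_eq_inv]
  set m := midpoint ℝ p q
  set c := ⟪p - q, x - m⟫ / ‖p - q‖ ^ 2
  have hc : c * ‖p - q‖ ^ 2 = ⟪p - q, x⟫ - ⟪p - q, m⟫ := by
    rw [← inner_sub_right]
    rcases eq_or_ne p q with rfl | hne
    · simp
    · exact div_mul_cancel₀ _ (pow_ne_zero _ (norm_ne_zero_iff.2 (sub_ne_zero.2 hne)))
  have h_center : 2 * ⟪p - q, m⟫ = ‖p‖ ^ 2 - ‖q‖ ^ 2 := by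
    rw [hm, inner_smul_right, inner_add_right, inner_sub_left, inner_sub_left,
      real_inner_self_eq_norm_sq, real_inner_self_eq_norm_sq, real_inner_comm p q]
    ring
  have h_side : 2 * ⟪p - q, x - m⟫ = dist x q ^ 2 - dist x p ^ 2 := by
    rw [dist_eq_norm, dist_eq_norm, hm, ← real_inner_self_eq_norm_sq,
      ← real_inner_self_eq_norm_sq]
    simp only [inner_sub_left, inner_sub_right, inner_add_right, inner_smul_right,
      real_inner_comm]
    ring
  have h_norm : ‖perpBisectorReflection p q x‖ ^ 2 = ‖x‖ ^ 2 - 4 * c * ⟪p - q, m⟫ := by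
    rw [h_apply, norm_sub_sq_real, inner_smul_right, norm_smul, mul_pow, Real.norm_eq_abs,
      sq_abs, real_inner_comm (p - q) x]
    linear_combination (4 * c) * hc
  have hc_nonneg : 0 ≤ c :=
    div_nonneg (by nlinarith [pow_le_pow_left₀ dist_nonneg hx 2]) (sq_nonneg _)
  have hpq_sq := pow_le_pow_left₀ (norm_nonneg p) hpq 2
  refine (pow_le_pow_iff_left₀ (norm_nonneg _) (norm_nonneg _) two_ne_zero).1 ?_
  nlinarith

variable [FiniteDimensional ℝ E] [MeasurableSpace E] [BorelSpace E]

theorem measurePreserving_perpBisectorReflection (p q : E) :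
    MeasurePreserving (perpBisectorReflection p q) :=
  (measurePreserving_add_right volume _).comp
    ((reflection (ℝ ∙ (p - q))ᗮ).measurePreserving.comp (measurePreserving_sub_right volume _))

theorem lintegral_ball_le_of_norm_le {f : E → ℝ≥0∞} (hf : ∀ ⦃x y : E⦄, ‖x‖ ≤ ‖y‖ → f x ≤ f y)
    (hpq : ‖p‖ ≤ ‖q‖) (R : ℝ) :
    ∫⁻ x in ball p R, f x ≤ ∫⁻ x in ball q R, f x := by
  set σ := perpBisectorReflection p q
  have h_swap : σ ⁻¹' (ball q R \ ball p R) = ball p R \ ball q R := by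
    rw [preimage_sdiff, perpBisectorReflection_preimage_ball_right,
      perpBisectorReflection_preimage_ball_left]
  have h_outside : ∫⁻ x in ball p R \ ball q R, f x ≤ ∫⁻ x in ball q R \ ball p R, f x :=
    calc ∫⁻ x in ball p R \ ball q R, f x
        ≤ ∫⁻ x in ball p R \ ball q R, f (σ x) := by
          refine setLIntegral_mono' (measurableSet_ball.diff measurableSet_ball)
            fun x ⟨hxp, hxq⟩ => hf (norm_le_norm_perpBisectorReflection hpq ?_)
          rw [mem_ball] at hxp hxq
          linarith
      _ = ∫⁻ x in ball q R \ ball p R, f x := by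
          rw [← h_swap]
          exact (measurePreserving_perpBisectorReflection p q).setLIntegral_comp_preimage_emb
            σ.toHomeomorph.measurableEmbedding f _
  calc ∫⁻ x in ball p R, f x
      = (∫⁻ x in ball p R ∩ ball q R, f x) + ∫⁻ x in ball p R \ ball q R, f x :=
        (lintegral_inter_add_sdiff f _ measurableSet_ball).symm
    _ ≤ (∫⁻ x in ball q R ∩ ball p R, f x) + ∫⁻ x in ball q R \ ball p R, f x := by
        rw [inter_comm]
        gcongr
    _ = ∫⁻ x in ball q R, f x := lintegral_inter_add_sdiff f _ measurableSet_ball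

theorem setIntegral_ball_rpow_norm_le_of_norm_le {a : ℝ} (ha : 0 ≤ a) (hpq : ‖p‖ ≤ ‖q‖)
    (R : ℝ) : ∫ x in ball p R, ‖x‖ ^ a ≤ ∫ x in ball q R, ‖x‖ ^ a := by
  have h_cont : Continuous fun x : E => ‖x‖ ^ a := continuous_norm.rpow_const fun _ => Or.inr ha
  have h_nonneg : ∀ μ : Measure E, 0 ≤ᵐ[μ] fun x : E => ‖x‖ ^ a :=
    fun _ => ae_of_all _ fun x => by positivity
  have h_int : IntegrableOn (fun x : E => ‖x‖ ^ a) (ball q R) :=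
    (h_cont.continuousOn.integrableOn_compact (isCompact_closedBall q R)).mono_set
      ball_subset_closedBall
  rw [integral_eq_lintegral_of_nonneg_ae (h_nonneg _) h_cont.aestronglyMeasurable,
    integral_eq_lintegral_of_nonneg_ae (h_nonneg _) h_cont.aestronglyMeasurable]
  exact ENNReal.toReal_mono h_int.lintegral_lt_top.ne <| lintegral_ball_le_of_norm_le
    (fun x y hxy => ENNReal.ofReal_le_ofReal (Real.rpow_le_rpow (norm_nonneg x) hxy ha)) hpq R

theorem setIntegral_ball_smul_rpow_norm (a : ℝ) {c : ℝ} (hc : 0 < c) (x0 : E) (R : ℝ) :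
    ∫ x in ball (c • x0) (c * R), ‖x‖ ^ a =
      c ^ ((Module.finrank ℝ E : ℝ) + a) * ∫ x in ball x0 R, ‖x‖ ^ a := by
  have h := Measure.setIntegral_comp_smul_of_pos volume (fun x : E => ‖x‖ ^ a) (ball x0 R) hc
  simp only [norm_smul, Real.norm_of_nonneg hc.le, Real.mul_rpow hc.le (norm_nonneg _),
    integral_const_mul, _root_.smul_ball hc.ne', smul_eq_mul] at h
  rw [Real.rpow_add hc, Real.rpow_natCast, mul_assoc, h]
  field_simp

theorem setIntegral_ball_two_mul_rpow_norm_le {a : ℝ} (ha : 0 ≤ a) (x0 : E) (R : ℝ) :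
    ∫ x in ball x0 (2 * R), ‖x‖ ^ a ≤
      2 ^ ((Module.finrank ℝ E : ℝ) + a) * ∫ x in ball x0 R, ‖x‖ ^ a := by
  have h_half : ‖(2⁻¹ : ℝ) • x0‖ ≤ ‖x0‖ := by
    rw [norm_smul]
    exact mul_le_of_le_one_left (norm_nonneg _) (by norm_num)
  calc ∫ x in ball x0 (2 * R), ‖x‖ ^ a
      = 2 ^ ((Module.finrank ℝ E : ℝ) + a) * ∫ x in ball ((2⁻¹ : ℝ) • x0) R, ‖x‖ ^ a := by
        rw [← setIntegral_ball_smul_rpow_norm a two_pos, smul_inv_smul₀ two_ne_zero]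
    _ ≤ 2 ^ ((Module.finrank ℝ E : ℝ) + a) * ∫ x in ball x0 R, ‖x‖ ^ a :=
        mul_le_mul_of_nonneg_left (setIntegral_ball_rpow_norm_le_of_norm_le ha h_half R)
          (by positivity)

end

theorem stmt_6_general (N : ℕ) (a : ℝ) (ha : 0 ≤ a)
    (x0 : EuclideanSpace ℝ (Fin N)) (R : ℝ) :
    (∫ x in Metric.ball x0 (2 * R), ‖x‖ ^ a) ≤
      2 ^ ((N : ℝ) + a) * ∫ x in Metric.ball x0 R, ‖x‖ ^ a := by
  simpa using setIntegral_ball_two_mul_rpow_norm_le ha x0 R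

/-- The power weight `‖x‖^a` on `ℝ^N` is doubling with doubling constant `2^(N+a)`. -/
theorem stmt_6 (N : ℕ) (hN : 1 ≤ N) (a : ℝ) (ha : 0 ≤ a)
    (x0 : EuclideanSpace ℝ (Fin N)) (R : ℝ) (hR : 0 < R) :
    (∫ x in Metric.ball x0 (2 * R), ‖x‖ ^ a) ≤
      2 ^ ((N : ℝ) + a) * ∫ x in Metric.ball x0 R, ‖x‖ ^ a :=
  stmt_6_general N a ha x0 R
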